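/- arXiv:2505.09709 — 2 statements merged into one kernel-verified Lean document; each statement's English description precedes it below -/
import Mathlib

section
/- A subset C of ker(A) spans the lattice ker(A) (i.e. generates ker(A) as a subgroup of ℤ^n) if and only if the saturation of the binomial ideal J_C with respect to m equals the toric ideal: J_C : m^∞ = I_A. -/
open MvPolynomial

/-- The monomial `e^a = e_1^{a_1} ⋯ e_n^{a_n}` in `K[e_1,…,e_n]`. -/
noncomputable def eMon (K : Type*) [CommSemiring K] {n : ℕ} (a : Fin n → ℕ) :
    MvPolynomial (Fin n) K :=
  ∏ i, X i ^ a i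

/-- The monomial map `φ_A : K[e_1,…,e_n] → K[x_1,…,x_m]`, `e_i ↦ x^{ς_i}` where
`ς_i` is the `i`-th column of `A`. -/
noncomputable def phiA (K : Type*) [CommSemiring K] {m n : ℕ}
    (A : Matrix (Fin m) (Fin n) ℕ) :
    MvPolynomial (Fin n) K →ₐ[K] MvPolynomial (Fin m) K :=
  aeval fun i => ∏ j, X j ^ A j i

/-- The toric ideal `I_A = ker φ_A`. -/
noncomputable def toricIdeal (K : Type*) [CommRing K] {m n : ℕ}
    (A : Matrix (Fin m) (Fin n) ℕ) : Ideal (MvPolynomial (Fin n) K) :=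
  RingHom.ker (phiA K A).toRingHom

/-- The `K`-linear map `π^{(s)}` sending `e^α ↦ α ⊗ ⋯ ⊗ α` (s factors), where
`(K^n)^{⊗ s}` is identified with functions `(Fin s → Fin n) → K`. -/
noncomputable def piMap (K : Type*) [CommSemiring K] {n : ℕ} (s : ℕ)
    (f : MvPolynomial (Fin n) K) : (Fin s → Fin n) → K :=
  fun j => ∑ α ∈ f.support, f.coeff α * ∏ i : Fin s, (α (j i) : K)

/-- `V_{A,σ}`: the `K`-span of the monomials `e^α` with `Aα = σ`. -/
noncomputable def fiberSpace (K : Type*) [CommRing K] {m n : ℕ}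
    (A : Matrix (Fin m) (Fin n) ℕ) (σ : Fin m → ℕ) :
    Submodule K (MvPolynomial (Fin n) K) :=
  Submodule.span K { f | ∃ a : Fin n → ℕ, (∀ j, ∑ i, A j i * a i = σ j) ∧ f = eMon K a }

/-- The sum `f_σ` of those terms of `f` whose monomial lies in `V_{A,σ}`. -/
noncomputable def fiberComponent {K : Type*} [CommRing K] {m n : ℕ}
    (A : Matrix (Fin m) (Fin n) ℕ) (σ : Fin m → ℕ)
    (f : MvPolynomial (Fin n) K) : MvPolynomial (Fin n) K :=
  ∑ α ∈ f.support.filter (fun α => ∀ j, ∑ i, A j i * α i = σ j),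
    monomial α (f.coeff α)

/-- For a prime ideal `I`, the `t`-th symbolic power
`I^{(t)} = { f | f·g ∈ I^t for some g ∉ I }`. -/
def symbolicPower {R : Type*} [CommRing R] (I : Ideal R) (t : ℕ) : Set R :=
  { f | ∃ g, g ∉ I ∧ f * g ∈ I ^ t }

/-- The saturation `I : x^∞ = { f | x^k f ∈ I for some k }`. -/
def satPow {R : Type*} [CommRing R] (I : Ideal R) (x : R) : Ideal R where
  carrier := { f | ∃ k : ℕ, x ^ k * f ∈ I }
  zero_mem' := ⟨0, by simp⟩
  add_mem' := by
    rintro a b ⟨k, hk⟩ ⟨l, hl⟩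
    refine ⟨k + l, ?_⟩
    have h : x ^ (k + l) * (a + b) = x ^ l * (x ^ k * a) + x ^ k * (x ^ l * b) := by
      ring
    rw [h]
    exact Ideal.add_mem _ (Ideal.mul_mem_left _ _ hk) (Ideal.mul_mem_left _ _ hl)
  smul_mem' := by
    rintro c a ⟨k, hk⟩
    refine ⟨k, ?_⟩
    have h : x ^ k * (c • a) = c * (x ^ k * a) := by
      rw [smul_eq_mul]; ring
    rw [h]
    exact Ideal.mul_mem_left _ _ hk

/-- The positive part `u^+` of an integer vector. -/
def pPart {n : ℕ} (u : Fin n → ℤ) : Fin n → ℕ := fun i => (u i).toNat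

/-- The negative part `u^-` of an integer vector. -/
def nPart {n : ℕ} (u : Fin n → ℤ) : Fin n → ℕ := fun i => (-u i).toNat

/-- The binomial `f_u = e^{u^+} - e^{u^-}`. -/
noncomputable def binom (K : Type*) [CommRing K] {n : ℕ} (u : Fin n → ℤ) :
    MvPolynomial (Fin n) K := eMon K (pPart u) - eMon K (nPart u)

/-- The lattice `ker A ⊆ ℤ^n`. -/
def matKerZ {m n : ℕ} (A : Matrix (Fin m) (Fin n) ℕ) : Set (Fin n → ℤ) :=
  { u | ∀ j, ∑ i, (A j i : ℤ) * u i = 0 }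

/-- The product of all the variables `m = e_1 ⋯ e_n`. -/
noncomputable def mProd (K : Type*) [CommSemiring K] (n : ℕ) :
    MvPolynomial (Fin n) K := ∏ i, X i


section AuxChia

variable {K : Type*} [CommSemiring K] {m n : ℕ}

theorem eMon_mul (a b : Fin n → ℕ) : eMon K a * eMon K b = eMon K (a + b) := by
  simp [eMon, ← Finset.prod_mul_distrib, ← pow_add]

theorem eMon_congr {a b : Fin n → ℕ} (h : ∀ i, a i = b i) : eMon K a = eMon K b := by
  congr 1; exact funext h

theorem mProd_pow (k : ℕ) : (mProd K n) ^ k = eMon K (fun _ => k) := by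
  simp [mProd, eMon, ← Finset.prod_pow]

theorem eMon_eq_monomial (a : Fin n → ℕ) :
    eMon K a = monomial (Finsupp.equivFunOnFinite.symm a) 1 := by
  rw [← prod_X_pow_eq_monomial]
  rw [Finset.prod_subset (Finset.subset_univ _)]
  · rfl
  · intro i _ hi
    simp only [Finsupp.notMem_support_iff] at hi
    simp [hi]

theorem phiA_eMon (A : Matrix (Fin m) (Fin n) ℕ) (a : Fin n → ℕ) :
    phiA K A (eMon K a) = eMon K (fun j => ∑ i, A j i * a i) := by
  simp only [phiA, eMon, map_prod, map_pow, aeval_X, ← Finset.prod_pow, ← pow_mul]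
  rw [Finset.prod_comm]
  refine Finset.prod_congr rfl fun j _ => ?_
  rw [← Finset.prod_pow_eq_pow_sum]

section CRing
variable {K : Type*} [CommRing K] {m n : ℕ}

theorem binom_zero : binom K (0 : Fin n → ℤ) = 0 := by
  have h : pPart (0 : Fin n → ℤ) = nPart 0 := by
    funext i; simp [pPart, nPart]
  simp [binom, h]

theorem binom_neg (u : Fin n → ℤ) : binom K (-u) = - binom K u := by
  have h1 : pPart (-u) = nPart u := by funext i; simp [pPart, nPart]
  have h2 : nPart (-u) = pPart u := by funext i; simp [pPart, nPart]
  simp [binom, h1, h2]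

theorem binom_key (u v : Fin n → ℤ) :
    eMon K (nPart u + nPart v) * binom K (u + v) =
      eMon K (nPart (u + v) + pPart v) * binom K u +
        eMon K (nPart (u + v) + nPart u) * binom K v := by
  simp only [binom, mul_sub, eMon_mul]
  have e1 : eMon K (nPart u + nPart v + pPart (u + v)) =
      eMon K (nPart (u + v) + pPart v + pPart u) := by
    refine eMon_congr fun i => ?_
    simp only [Pi.add_apply, pPart, nPart, Pi.neg_apply]
    omega
  have e2 : eMon K (nPart (u + v) + pPart v + nPart u) =
      eMon K (nPart (u + v) + nPart u + pPart v) := by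
    refine eMon_congr fun i => ?_
    simp only [Pi.add_apply]; omega
  have e3 : eMon K (nPart u + nPart v + nPart (u + v)) =
      eMon K (nPart (u + v) + nPart u + nPart v) := by
    refine eMon_congr fun i => ?_
    simp only [Pi.add_apply]; omega
  rw [e1, e2, e3]
  ring

/-- membership in satPow from a monomial-multiple membership -/
theorem satPow_of_eMon_mul {J : Ideal (MvPolynomial (Fin n) K)} {f : MvPolynomial (Fin n) K}
    (c : Fin n → ℕ) (h : eMon K c * f ∈ J) : f ∈ satPow J (mProd K n) := by
  refine ⟨∑ i, c i, ?_⟩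
  have hb : ∀ i, c i ≤ ∑ i, c i := fun i => Finset.single_le_sum (fun j _ => Nat.zero_le _) (Finset.mem_univ i)
  have : (mProd K n) ^ (∑ i, c i) = eMon K (fun i => (∑ j, c j) - c i) * eMon K c := by
    rw [mProd_pow, eMon_mul]
    exact eMon_congr fun i => by have := hb i; simp; omega
  rw [this, mul_assoc]
  exact Ideal.mul_mem_left _ _ h


theorem satPow_binom_add {J : Ideal (MvPolynomial (Fin n) K)} {u v : Fin n → ℤ}
    (hu : binom K u ∈ satPow J (mProd K n)) (hv : binom K v ∈ satPow J (mProd K n)) :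
    binom K (u + v) ∈ satPow J (mProd K n) := by
  obtain ⟨j, hj⟩ := hu
  obtain ⟨l, hl⟩ := hv
  apply satPow_of_eMon_mul (fun i => (j + l) + (nPart u i + nPart v i))
  have hc : eMon K (fun i => (j + l) + (nPart u i + nPart v i)) =
      ((mProd K n) ^ j * (mProd K n) ^ l) * eMon K (nPart u + nPart v) := by
    rw [mProd_pow, mProd_pow, eMon_mul, eMon_mul]
    exact eMon_congr fun i => rfl
  rw [hc, mul_assoc, binom_key, mul_add]
  apply Ideal.add_mem
  · have h : ((mProd K n) ^ j * (mProd K n) ^ l) *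
        (eMon K (nPart (u + v) + pPart v) * binom K u) =
        ((mProd K n) ^ l * eMon K (nPart (u + v) + pPart v)) *
          ((mProd K n) ^ j * binom K u) := by ring
    rw [h]
    exact Ideal.mul_mem_left _ _ hj
  · have h : ((mProd K n) ^ j * (mProd K n) ^ l) *
        (eMon K (nPart (u + v) + nPart u) * binom K v) =
        ((mProd K n) ^ j * eMon K (nPart (u + v) + nPart u)) *
          ((mProd K n) ^ l * binom K v) := by ring
    rw [h]
    exact Ideal.mul_mem_left _ _ hl

/-- The subgroup of vectors whose binomial lies in the saturation. -/
def binomSat (K : Type*) [CommRing K] {n : ℕ} (J : Ideal (MvPolynomial (Fin n) K)) :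
    AddSubgroup (Fin n → ℤ) where
  carrier := { u | binom K u ∈ satPow J (mProd K n) }
  zero_mem' := by
    have : binom K (0 : Fin n → ℤ) ∈ satPow J (mProd K n) := by
      rw [binom_zero]; exact Ideal.zero_mem _
    exact this
  add_mem' := fun hu hv => satPow_binom_add hu hv
  neg_mem' := by
    intro u hu
    have : binom K (-u) ∈ satPow J (mProd K n) := by
      rw [binom_neg]; exact Submodule.neg_mem _ hu
    exact this

theorem pPart_sub_nPart (u : Fin n → ℤ) (i : Fin n) :
    (pPart u i : ℤ) - nPart u i = u i := by
  simp only [pPart, nPart]; omega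

theorem colsum_eq {A : Matrix (Fin m) (Fin n) ℕ} {u : Fin n → ℤ}
    (hu : u ∈ matKerZ A) (j : Fin m) :
    ∑ i, A j i * pPart u i = ∑ i, A j i * nPart u i := by
  have h := hu j
  have : ((∑ i, A j i * pPart u i : ℕ) : ℤ) = ((∑ i, A j i * nPart u i : ℕ) : ℤ) := by
    push_cast
    rw [← sub_eq_zero, ← Finset.sum_sub_distrib, ← h]
    refine Finset.sum_congr rfl fun i _ => ?_
    rw [← pPart_sub_nPart u i]; ring
  exact_mod_cast this

theorem binom_mem_toric {A : Matrix (Fin m) (Fin n) ℕ} {u : Fin n → ℤ}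
    (hu : u ∈ matKerZ A) : binom K u ∈ toricIdeal K A := by
  show phiA K A (binom K u) = 0
  rw [binom, map_sub, phiA_eMon, phiA_eMon, sub_eq_zero]
  exact eMon_congr fun j => colsum_eq hu j

theorem eMon_ne_zero [Nontrivial K] (a : Fin n → ℕ) : eMon K a ≠ 0 := by
  rw [eMon_eq_monomial]
  simp [MvPolynomial.monomial_eq_zero]

theorem satPow_le_toric [IsDomain K] {A : Matrix (Fin m) (Fin n) ℕ}
    {J : Ideal (MvPolynomial (Fin n) K)} (hJ : J ≤ toricIdeal K A) :
    satPow J (mProd K n) ≤ toricIdeal K A := by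
  rintro f ⟨k, hk⟩
  have h0 : phiA K A ((mProd K n) ^ k * f) = 0 := hJ hk
  rw [map_mul, map_pow] at h0
  have hm : phiA K A (mProd K n) ≠ 0 := by
    have : phiA K A (mProd K n) = eMon K (fun j => ∑ i, A j i * 1) := by
      rw [← pow_one (mProd K n), mProd_pow, phiA_eMon]
    rw [this]
    exact eMon_ne_zero _
  show phiA K A f = 0
  rcases mul_eq_zero.mp h0 with h | h
  · exact absurd (pow_eq_zero_iff'.mp h).1 hm
  · exact h

end CRing

section Psi
variable {K : Type*} [CommRing K] {n : ℕ} (C : Set (Fin n → ℤ))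

noncomputable def psiC :
    MvPolynomial (Fin n) K →ₐ[K]
      AddMonoidAlgebra K ((Fin n → ℤ) ⧸ AddSubgroup.closure C) :=
  aeval fun i =>
    AddMonoidAlgebra.single (QuotientAddGroup.mk (Pi.single i 1 : Fin n → ℤ)) 1

theorem psiC_eMon (a : Fin n → ℕ) :
    psiC (K := K) C (eMon K a) =
      AddMonoidAlgebra.single
        (QuotientAddGroup.mk (fun i => (a i : ℤ)) :
          (Fin n → ℤ) ⧸ AddSubgroup.closure C) 1 := by
  simp only [psiC, eMon, map_prod, map_pow, aeval_X, AddMonoidAlgebra.single_pow, one_pow]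
  rw [AddMonoidAlgebra.prod_single, Finset.prod_const_one]
  congr 1
  have : ∀ i : Fin n, (a i • (QuotientAddGroup.mk (Pi.single i 1 : Fin n → ℤ)) :
      (Fin n → ℤ) ⧸ AddSubgroup.closure C) =
      QuotientAddGroup.mk (a i • Pi.single i 1) := by
    intro i; rfl
  simp only [this]
  have hsum : (∑ x : Fin n, (QuotientAddGroup.mk (a x • Pi.single x 1) :
      (Fin n → ℤ) ⧸ AddSubgroup.closure C)) =
      QuotientAddGroup.mk (∑ x : Fin n, a x • Pi.single x 1) :=
    (map_sum (QuotientAddGroup.mk' (AddSubgroup.closure C)) (fun x => a x • Pi.single x 1)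
      Finset.univ).symm
  rw [hsum]
  congr 1
  funext j
  simp only [Finset.sum_apply, Pi.smul_apply, Pi.single_apply]
  rw [Finset.sum_eq_single j]
  · simp
  · intro b _ hb
    simp [hb, Ne.symm hb]
  · simp

theorem psiC_binom {v : Fin n → ℤ} (hv : v ∈ AddSubgroup.closure C) :
    psiC (K := K) C (binom K v) = 0 := by
  rw [binom, map_sub, psiC_eMon, psiC_eMon, sub_eq_zero]
  congr 1
  rw [QuotientAddGroup.eq_iff_sub_mem]
  have : (fun i => (pPart v i : ℤ)) - (fun i => (nPart v i : ℤ)) = v := by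
    funext i
    simp only [Pi.sub_apply]
    exact pPart_sub_nPart v i
  rw [this]
  exact hv

theorem mem_closure_of_satPow [Nontrivial K] {u : Fin n → ℤ}
    (hu : binom K u ∈ satPow
      (Ideal.span { g : MvPolynomial (Fin n) K | ∃ v ∈ C, g = binom K v })
      (mProd K n)) :
    u ∈ AddSubgroup.closure C := by
  obtain ⟨k, hk⟩ := hu
  have hker : Ideal.span { g : MvPolynomial (Fin n) K | ∃ v ∈ C, g = binom K v } ≤
      RingHom.ker (psiC (K := K) C).toRingHom := by
    rw [Ideal.span_le]
    rintro g ⟨v, hv, rfl⟩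
    exact psiC_binom C (AddSubgroup.subset_closure hv)
  have h0 : psiC (K := K) C ((mProd K n) ^ k * binom K u) = 0 := hker hk
  rw [map_mul, mProd_pow, psiC_eMon, binom, map_sub, psiC_eMon, psiC_eMon, mul_sub,
    AddMonoidAlgebra.single_mul_single, AddMonoidAlgebra.single_mul_single,
    one_mul, sub_eq_zero] at h0
  have heq := AddMonoidAlgebra.single_inj.mp h0
  rcases heq with ⟨hg, -⟩ | ⟨h1, -⟩
  · have hg' := add_left_cancel hg
    rw [QuotientAddGroup.eq_iff_sub_mem] at hg'
    have : (fun i => (pPart u i : ℤ)) - (fun i => (nPart u i : ℤ)) = u := by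
      funext i
      simp only [Pi.sub_apply]
      exact pPart_sub_nPart u i
    rwa [this] at hg'
  · exact absurd h1 one_ne_zero

end Psi

section Span
variable {K : Type*} [CommRing K] {m n : ℕ} (A : Matrix (Fin m) (Fin n) ℕ)

theorem eMon_coe (γ : Fin n →₀ ℕ) : eMon K ⇑γ = monomial γ (1 : K) := by
  rw [eMon_eq_monomial, Finsupp.equivFunOnFinite_symm_coe]

/-- The image fiber of a monomial exponent. -/
noncomputable def bMap (γ : Fin n →₀ ℕ) : Fin m →₀ ℕ :=
  Finsupp.equivFunOnFinite.symm (fun j => ∑ i, A j i * γ i)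

theorem phiA_monomial (γ : Fin n →₀ ℕ) (c : K) :
    phiA K A (monomial γ c) = monomial (bMap A γ) c := by
  have h1 : (monomial γ c : MvPolynomial (Fin n) K) = C c * eMon K ⇑γ := by
    rw [eMon_coe, C_mul_monomial, mul_one]
  rw [h1, map_mul, phiA_eMon]
  have h2 : eMon K (fun j => ∑ i, A j i * γ i) = monomial (bMap A γ) (1 : K) := by
    rw [eMon_eq_monomial]; rfl
  have h3 : phiA K A (C c) = C c := by
    simp [phiA]
  rw [h2, h3, C_mul_monomial, mul_one]

theorem phiA_coeff (f : MvPolynomial (Fin n) K) (τ : Fin m →₀ ℕ) :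
    coeff τ (phiA K A f) =
      ∑ β ∈ f.support.filter (fun β => bMap A β = τ), coeff β f := by
  conv_lhs => rw [← support_sum_monomial_coeff f]
  rw [map_sum]
  simp only [phiA_monomial]
  rw [coeff_sum]
  simp only [coeff_monomial]
  rw [Finset.sum_filter]

end Span

section SpanField
variable {K : Type*} [Field K] {m n : ℕ} (A : Matrix (Fin m) (Fin n) ℕ)

theorem toric_le_satPow {J : Ideal (MvPolynomial (Fin n) K)}
    (hbin : ∀ u ∈ matKerZ A, binom K u ∈ satPow J (mProd K n)) :
    toricIdeal K A ≤ satPow J (mProd K n) := by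
  suffices h : ∀ N (f : MvPolynomial (Fin n) K), f.support.card ≤ N →
      phiA K A f = 0 → f ∈ satPow J (mProd K n) by
    intro f hf
    exact h f.support.card f le_rfl hf
  intro N
  induction N with
  | zero =>
      intro f hcard _
      have : f.support = ∅ := Finset.card_eq_zero.mp (Nat.le_zero.mp hcard)
      rw [MvPolynomial.support_eq_empty.mp this]
      exact Ideal.zero_mem _
  | succ N ih =>
      intro f hcard hker
      by_cases hf0 : f = 0
      · rw [hf0]; exact Ideal.zero_mem _
      · obtain ⟨α, hα⟩ := Finset.nonempty_iff_ne_empty.mpr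
          (fun h => hf0 (MvPolynomial.support_eq_empty.mp h))
        -- coefficient sum over the fiber of α is zero
        have hc0 : (∑ β ∈ f.support.filter (fun β => bMap A β = bMap A α),
            coeff β f) = 0 := by
          rw [← phiA_coeff, hker, coeff_zero]
        have hαmem : α ∈ f.support.filter (fun β => bMap A β = bMap A α) :=
          Finset.mem_filter.mpr ⟨hα, rfl⟩
        have hcα : coeff α f ≠ 0 := (MvPolynomial.mem_support_iff).mp hα
        -- find another element β in the fiber
        have hexists : ∃ β ∈ f.support.filter (fun β => bMap A β = bMap A α),
            β ≠ α := by
          by_contra hcon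
          push_neg at hcon
          have hsing : f.support.filter (fun β => bMap A β = bMap A α) = {α} := by
            apply Finset.eq_singleton_iff_unique_mem.mpr
            exact ⟨hαmem, fun x hx => hcon x hx⟩
          rw [hsing, Finset.sum_singleton] at hc0
          exact hcα hc0
        obtain ⟨β, hβmem, hβα⟩ := hexists
        have hβsup : β ∈ f.support := (Finset.mem_filter.mp hβmem).1
        have hfib : bMap A β = bMap A α := (Finset.mem_filter.mp hβmem).2
        -- the lattice vector
        set u : Fin n → ℤ := fun i => (α i : ℤ) - β i with hu_def
        have hu : u ∈ matKerZ A := by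
          intro j
          have hfun : (fun j => ∑ i, A j i * β i) = (fun j => ∑ i, A j i * α i) := by
            have := congrArg (Finsupp.equivFunOnFinite) (hfib)
            simpa [bMap] using this
          have hj := congrFun hfun j
          have : ((∑ i, A j i * β i : ℕ) : ℤ) = ((∑ i, A j i * α i : ℕ) : ℤ) := by
            exact_mod_cast hj
          push_cast at this
          simp only [hu_def]
          rw [show (∑ i, (A j i : ℤ) * ((α i : ℤ) - (β i : ℤ))) =
            (∑ i, (A j i : ℤ) * (α i : ℤ)) - ∑ i, (A j i : ℤ) * (β i : ℤ) by
              rw [← Finset.sum_sub_distrib]; exact Finset.sum_congr rfl fun i _ => by ring]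
          omega
        -- the binomial identity
        have hbid : (monomial α (1:K)) - monomial β 1 =
            eMon K (fun i => min (α i) (β i)) * binom K u := by
          rw [binom, mul_sub, eMon_mul, eMon_mul]
          have h1 : ((fun i => min (α i) (β i)) + pPart u) = ⇑α := by
            funext i; simp only [Pi.add_apply, pPart, hu_def]; omega
          have h2 : ((fun i => min (α i) (β i)) + nPart u) = ⇑β := by
            funext i; simp only [Pi.add_apply, nPart, hu_def]; omega
          rw [h1, h2, eMon_coe, eMon_coe]
        set d : MvPolynomial (Fin n) K :=
          C (coeff α f) * (eMon K (fun i => min (α i) (β i)) * binom K u) with hd_def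
        have hd_eq : d = monomial α (coeff α f) - monomial β (coeff α f) := by
          rw [hd_def, ← hbid, mul_sub, C_mul_monomial, C_mul_monomial, mul_one]
        have hd_sat : d ∈ satPow J (mProd K n) :=
          Ideal.mul_mem_left _ _ (Ideal.mul_mem_left _ _ (hbin u hu))
        have hd_ker : phiA K A d = 0 := by
          have hb0 : phiA K A (binom K u) = 0 := by
            have hb := binom_mem_toric (K := K) hu
            simpa [toricIdeal, RingHom.mem_ker] using hb
          rw [hd_def, map_mul, map_mul, hb0, mul_zero, mul_zero]
        -- the remainder
        have hrem_ker : phiA K A (f - d) = 0 := by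
          rw [map_sub, hker, hd_ker, sub_zero]
        have hcoeffd : ∀ γ, coeff γ d =
            (if α = γ then coeff α f else 0) - (if β = γ then coeff α f else 0) := by
          intro γ
          rw [hd_eq, MvPolynomial.coeff_sub, coeff_monomial, coeff_monomial]
        have hrem_supp : (f - d).support ⊆ f.support.erase α := by
          intro γ hγ
          rw [MvPolynomial.mem_support_iff, MvPolynomial.coeff_sub, hcoeffd] at hγ
          rw [Finset.mem_erase, MvPolynomial.mem_support_iff]
          constructor
          · rintro rfl
            apply hγ
            rw [if_pos rfl, if_neg hβα]
            ring
          · intro h0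
            apply hγ
            have h1 : α ≠ γ := fun h => hcα (by rw [h]; exact h0)
            have h2 : β ≠ γ := fun h =>
              ((MvPolynomial.mem_support_iff).mp hβsup) (by rw [h]; exact h0)
            rw [h0, if_neg h1, if_neg h2]
            ring
        have hcard' : (f - d).support.card ≤ N := by
          have h1 := Finset.card_le_card hrem_supp
          have h2 := Finset.card_erase_of_mem hα
          omega
        have hrem : f - d ∈ satPow J (mProd K n) := ih _ hcard' hrem_ker
        have hfd : f = (f - d) + d := by ring
        rw [hfd]
        exact Ideal.add_mem _ hrem hd_sat

end SpanField


end AuxChia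

/-- Sturmfels. A subset `C ⊆ ker(A)` generates `ker(A)` as a subgroup of
`ℤ^n` if and only if `J_C : m^∞ = I_A`. -/
theorem closure_eq_iff_satPow_eq_toricIdeal
    {K : Type*} [Field K] [IsAlgClosed K] [CharZero K]
    {m n : ℕ} (A : Matrix (Fin m) (Fin n) ℕ)
    (hA : ∀ i, ∃ j, A j i ≠ 0)
    (C : Set (Fin n → ℤ)) (hC : C ⊆ matKerZ A) :
    AddSubgroup.closure C = AddSubgroup.closure (matKerZ A)
      ↔ satPow (Ideal.span { g : MvPolynomial (Fin n) K | ∃ v ∈ C, g = binom K v })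
          (mProd K n) = toricIdeal K A := by
  constructor
  · intro hcl
    apply le_antisymm
    · apply satPow_le_toric
      rw [Ideal.span_le]
      rintro g ⟨v, hv, rfl⟩
      exact binom_mem_toric (hC hv)
    · apply toric_le_satPow
      intro u hu
      have h1 : u ∈ AddSubgroup.closure C := by
        rw [hcl]; exact AddSubgroup.subset_closure hu
      have h2 : AddSubgroup.closure C ≤
          binomSat K (Ideal.span { g : MvPolynomial (Fin n) K | ∃ v ∈ C, g = binom K v }) := by
        refine (AddSubgroup.closure_le _).mpr ?_
        intro v hv
        show binom K v ∈ satPow _ (mProd K n)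
        exact ⟨0, by rw [pow_zero, one_mul]; exact Ideal.subset_span ⟨v, hv, rfl⟩⟩
      exact h2 h1
  · intro hsat
    apply le_antisymm
    · exact AddSubgroup.closure_mono hC
    · refine (AddSubgroup.closure_le _).mpr ?_
      intro u hu
      apply mem_closure_of_satPow (K := K) C
      rw [hsat]
      exact binom_mem_toric hu
end

section
/- Let t ≥ 1, let v_1,…,v_t ∈ ker(A) and let β ∈ ℕ^n. Then π^{(t)}(e^β · f_{v_1}⋯f_{v_t}) = π^{(t)}(f_{v_1}⋯f_{v_t}) = Σ_{ω ∈ S_t} v_{ω(1)} ⊗ ⋯ ⊗ v_{ω(t)}, where S_t is the symmetric group on {1,…,t} and each v_i ∈ ℤ^n is regarded as a vector in K^n. -/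
open MvPolynomial

/-! Expanding the binomials, `e^β f_{v_1} ⋯ f_{v_t} = Σ_ε ± e^{β + Σ_i v_i^{ε_i}}` over the sign
choices `ε : Fin t → {+, -}`, and `π^{(t)}(e^α)(j) = ∏_b α(j_b)`. Expanding each factor
`β(j_b) + Σ_i v_i^{ε_i}(j_b)` as well and summing over `ε` first, an assignment of the `t` tensor
slots `b` to the summands cancels as soon as it misses some binomial `i`, because the two signs of
`f_{v_i}` then contribute with opposite weights. Only the bijections between slots and binomials
survive, each contributing `∏_b (v^+ - v^-)(j_b)`, so the value is the permanent of
`(v_i(j_b))_{i,b}`, whatever `β` is. -/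

open Finset

lemma exists_perm_of_forall_some_mem_range {ι : Type*} [Finite ι] {φ : ι → Option ι}
    (h : ∀ i, some i ∈ Set.range φ) : ∃ σ : Equiv.Perm ι, ∀ b, φ b = some (σ b) := by
  choose g hg using h
  have hg_inj : Function.Injective g := fun i i' hii' =>
    Option.some_injective _ ((hg i).symm.trans (hii' ▸ hg i'))
  let σ := Equiv.ofBijective g (Finite.injective_iff_bijective.mp hg_inj)
  refine ⟨σ.symm, fun b => ?_⟩
  rw [← hg (σ.symm b)]
  exact congrArg φ (σ.apply_symm_apply b).symm

section PermanentExpansion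

variable {R ι E : Type*} [CommRing R] [Fintype ι] [DecidableEq ι]

lemma prod_add_sum_eq_sum_option_elim (x : ι → R) (z : ι → ι → R) :
    ∏ b, (x b + ∑ i, z i b) = ∑ φ : ι → Option ι, ∏ b, (φ b).elim (x b) (z · b) := by
  rw [← Fintype.prod_sum fun b (o : Option ι) => o.elim (x b) (z · b)]
  exact prod_congr rfl fun b _ => by rw [Fintype.sum_option]; rfl

lemma prod_option_elim_eq_mul_prod_fiber (φ : ι → Option ι) (x : ι → R) (z : ι → ι → R) :
    ∏ b, (φ b).elim (x b) (z · b)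
      = (∏ b with φ b = none, x b) * ∏ i, ∏ b with φ b = some i, z i b := by
  rw [← prod_fiberwise univ φ, Fintype.prod_option]
  congr 1
  · exact prod_congr rfl fun b hb => by simp [(mem_filter.mp hb).2]
  · exact prod_congr rfl fun i _ => prod_congr rfl fun b hb => by simp [(mem_filter.mp hb).2]

variable [Fintype E]

lemma sum_prod_mul_prod_option_elim (w : ι → E → R) (x : ι → R) (c : ι → E → ι → R)
    (φ : ι → Option ι) :
    ∑ ε : ι → E, (∏ i, w i (ε i)) * ∏ b, (φ b).elim (x b) (fun i => c i (ε i) b)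
      = (∏ b with φ b = none, x b) * ∏ i, ∑ e, w i e * ∏ b with φ b = some i, c i e b := by
  simp_rw [Fintype.prod_sum, mul_sum, prod_option_elim_eq_mul_prod_fiber φ x, prod_mul_distrib]
  exact sum_congr rfl fun ε _ => by ring

theorem sum_prod_mul_prod_add_sum_eq_permanent (w : ι → E → R) (hw : ∀ i, ∑ e, w i e = 0)
    (x : ι → R) (c : ι → E → ι → R) :
    ∑ ε : ι → E, (∏ i, w i (ε i)) * ∏ b, (x b + ∑ i, c i (ε i) b)
      = (Matrix.of fun i b => ∑ e, w i e * c i e b).permanent := by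
  simp_rw [prod_add_sum_eq_sum_option_elim, mul_sum]
  rw [sum_comm]
  simp_rw [sum_prod_mul_prod_option_elim]
  symm
  refine Fintype.sum_of_injective (fun σ b => some (σ b))
    (fun σ σ' h => Equiv.ext fun b => Option.some_injective _ (congrFun h b)) _ _ ?_ ?_
  · intro φ hφ
    obtain ⟨i, hi⟩ : ∃ i, some i ∉ Set.range φ := by
      by_contra! h
      obtain ⟨σ, hσ⟩ := exists_perm_of_forall_some_mem_range h
      exact hφ ⟨σ, funext fun b => (hσ b).symm⟩
    have hi_fiber : ∀ b, φ b ≠ some i := fun b hb => hi ⟨b, hb⟩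
    refine mul_eq_zero_of_right _ (prod_eq_zero (mem_univ i) ?_)
    simp [hi_fiber, hw]
  · intro σ
    have hfiber : ∀ i, ({b | σ b = i} : Finset ι) = {σ.symm i} := fun i => by
      ext b; simp [Equiv.eq_symm_apply]
    simp only [Option.some.injEq, hfiber, reduceCtorEq, filter_false, prod_empty, one_mul,
      prod_singleton]
    rw [← Equiv.prod_comp σ fun i => ∑ e, w i e * c i e (σ.symm i)]
    simp

end PermanentExpansion

section Binomials

variable {K : Type*} [CommRing K] {n : ℕ}

lemma eMon_add (a b : Fin n → ℕ) : eMon K (a + b) = eMon K a * eMon K b := by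
  simp [eMon, pow_add, prod_mul_distrib]

lemma eMon_zero : eMon K (0 : Fin n → ℕ) = 1 := by
  simp [eMon]

lemma eMon_sum {ι : Type*} (s : Finset ι) (a : ι → Fin n → ℕ) :
    eMon K (∑ i ∈ s, a i) = ∏ i ∈ s, eMon K (a i) := by
  simp only [eMon, Finset.sum_apply, ← prod_pow_eq_pow_sum]
  exact prod_comm

lemma binom_eq_sum_bool (u : Fin n → ℤ) :
    binom K u
      = ∑ e : Bool, (if e then 1 else -1 : K) • eMon K (if e then pPart u else nPart u) := by
  simp [binom, sub_eq_add_neg]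

lemma eMon_mul_prod_binom {ι : Type*} [Fintype ι] [DecidableEq ι] (β : Fin n → ℕ)
    (u : ι → Fin n → ℤ) :
    eMon K β * ∏ i, binom K (u i)
      = ∑ ε : ι → Bool, (∏ i, if ε i then 1 else -1 : K)
          • eMon K (β + ∑ i, if ε i then pPart (u i) else nPart (u i)) := by
  simp_rw [binom_eq_sum_bool, Fintype.prod_sum, mul_sum, eMon_add, eMon_sum, smul_eq_C_mul,
    prod_mul_distrib, map_prod]
  exact sum_congr rfl fun ε _ => by ring

lemma pPart_sub_nPart_cast (u : Fin n → ℤ) (k : Fin n) :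
    ((pPart u k : ℕ) : K) - (nPart u k : ℕ) = u k := by
  rw [pPart, nPart]
  exact_mod_cast congrArg (Int.cast : ℤ → K) (Int.toNat_sub_toNat_neg (u k))

end Binomials

section PiMap

variable {K : Type*} [CommRing K] {n s : ℕ}

lemma piMap_eq_constr (f : MvPolynomial (Fin n) K) (j : Fin s → Fin n) :
    piMap K s f j = (basisMonomials (Fin n) K).constr K (fun α => ∏ b, (α (j b) : K)) f := by
  rw [Module.Basis.constr_apply]
  simp only [piMap, Finsupp.sum, smul_eq_mul]
  rfl

lemma piMap_eMon (a : Fin n → ℕ) (j : Fin s → Fin n) :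
    piMap K s (eMon K a) j = ∏ b, (a (j b) : K) := by
  have : eMon K a = basisMonomials (Fin n) K (Finsupp.equivFunOnFinite.symm a) := by
    simp [eMon, monomial_eq, Finsupp.prod_fintype]
  rw [piMap_eq_constr, this, Module.Basis.constr_basis]
  rfl

end PiMap

lemma piMap_eMon_mul_prod_binom {K : Type*} [CommRing K] {n t : ℕ} (β : Fin n → ℕ)
    (v : Fin t → Fin n → ℤ) (j : Fin t → Fin n) :
    piMap K t (eMon K β * ∏ i, binom K (v i)) j
      = (Matrix.of fun i b => (v i (j b) : K)).permanent := by
  rw [piMap_eq_constr, eMon_mul_prod_binom, map_sum]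
  simp_rw [map_smul, ← piMap_eq_constr, piMap_eMon, smul_eq_mul, Pi.add_apply, Finset.sum_apply,
    Nat.cast_add, Nat.cast_sum]
  refine (sum_prod_mul_prod_add_sum_eq_permanent (fun _ (e : Bool) => if e then 1 else -1)
    (by simp) (fun b => (β (j b) : K))
    fun i (e : Bool) b => ((if e then pPart (v i) else nPart (v i)) (j b) : K)).trans ?_
  congr
  ext i b
  simp [← pPart_sub_nPart_cast, sub_eq_add_neg]

theorem piMap_prod_binom_general
    {K : Type*} [Field K] {n : ℕ} (t : ℕ) (v : Fin t → Fin n → ℤ) (β : Fin n → ℕ) :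
    piMap K t (eMon K β * ∏ i, binom K (v i)) = piMap K t (∏ i, binom K (v i))
    ∧ piMap K t (∏ i, binom K (v i))
        = fun j : Fin t → Fin n =>
            ∑ ω : Equiv.Perm (Fin t), ∏ i : Fin t, ((v (ω i) (j i) : ℤ) : K) := by
  have h_eMon_mul (β' : Fin n → ℕ) := funext (piMap_eMon_mul_prod_binom (K := K) β' v)
  have h_prod : piMap K t (∏ i, binom K (v i))
      = fun j => (Matrix.of fun i b => (v i (j b) : K)).permanent := by
    simpa only [eMon_zero, one_mul] using h_eMon_mul 0
  exact ⟨(h_eMon_mul β).trans h_prod.symm, h_prod⟩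

/-- For `t ≥ 1`, `v_1,…,v_t ∈ ker(A)` and `β ∈ ℕ^n`:
`π^{(t)}(e^β·f_{v_1}⋯f_{v_t}) = π^{(t)}(f_{v_1}⋯f_{v_t}) = Σ_{ω ∈ S_t} v_{ω(1)} ⊗ ⋯ ⊗ v_{ω(t)}`. -/
theorem piMap_prod_binom
    {K : Type*} [Field K] [IsAlgClosed K] [CharZero K]
    {m n : ℕ} (A : Matrix (Fin m) (Fin n) ℕ)
    (hA : ∀ i, ∃ j, A j i ≠ 0)
    (t : ℕ) (ht : 1 ≤ t)
    (v : Fin t → Fin n → ℤ) (hv : ∀ i, v i ∈ matKerZ A) (β : Fin n → ℕ) :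
    piMap K t (eMon K β * ∏ i, binom K (v i)) = piMap K t (∏ i, binom K (v i))
    ∧ piMap K t (∏ i, binom K (v i))
        = fun j : Fin t → Fin n =>
            ∑ ω : Equiv.Perm (Fin t), ∏ i : Fin t, ((v (ω i) (j i) : ℤ) : K) :=
  piMap_prod_binom_general t v β
end
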